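/- arXiv:2303.12331 — 10 statements merged into one kernel-verified Lean document; each statement's English description precedes it below -/
import Mathlib

section
/- If X is a finite set of points in ℝ^d such that the squared Euclidean distance between any two distinct points of X is an odd integer, then |X| ≤ d + 2. -/
/-!
Assume `#X ≥ d + 3` and pick `x₀ ∈ X` together with `n` further points `p i`, where `n` is even
and `d < n`. The Gram matrix `G` of the vectors `p i - x₀` is singular, since `n` vectors in
`ℝ^d` are linearly dependent. By polarization `2 G` is the integer matrix with entries
`|p i - x₀|² + |p j - x₀|² - |p i - p j|²`, which is even on the diagonal and odd off it, so
modulo 2 it is `J - I = J + I`, whose determinant is `n + 1 = 1`. Hence `det (2 G)` is odd, a contradiction.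
-/

open Finset Matrix Module

namespace Matrix

variable {ι : Type*} [Fintype ι] [DecidableEq ι]

theorem det_of_ite_zero_one_of_charTwo {R : Type*} [CommRing R] [CharP R 2] :
    (of fun i j : ι => if i = j then (0 : R) else 1).det = Fintype.card ι + 1 := by
  have hJ : (of fun i j : ι => if i = j then (0 : R) else 1) =
      1 + replicateCol Unit (fun _ => (1 : R)) * replicateRow Unit (fun _ => (1 : R)) := by
    ext i j
    by_cases hij : i = j <;> simp [hij, mul_apply, CharTwo.add_self_eq_zero]
  rw [hJ, det_one_add_replicateCol_mul_replicateRow]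
  simp [dotProduct, add_comm]

theorem odd_det_of_even_diag_of_odd_offDiag (N : Matrix ι ι ℤ) (hι : Even (Fintype.card ι))
    (hdiag : ∀ i, Even (N i i)) (hoff : Pairwise fun i j => Odd (N i j)) : Odd N.det := by
  have hN : N.map (Int.cast : ℤ → ZMod 2) = of fun i j => if i = j then 0 else 1 := by
    ext i j
    by_cases hij : i = j
    · subst hij
      simpa using (ZMod.intCast_eq_zero_iff_even).mpr (hdiag i)
    · simpa [hij] using (ZMod.intCast_eq_one_iff_odd).mpr (hoff hij)
  rw [← ZMod.intCast_eq_one_iff_odd, Int.cast_det, hN, det_of_ite_zero_one_of_charTwo,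
    (ZMod.natCast_eq_zero_iff_even).mpr hι, zero_add]

end Matrix

section

variable {E : Type*} [NormedAddCommGroup E] [InnerProductSpace ℝ E]

theorem two_mul_inner_sub_sub_eq_dist_sq (x y z : E) :
    2 * inner ℝ (y - x) (z - x) = dist x y ^ 2 + dist x z ^ 2 - dist y z ^ 2 := by
  rw [dist_comm x y, dist_comm x z, dist_eq_norm y x, dist_eq_norm z x, dist_eq_norm y z,
    ← sub_sub_sub_cancel_right y z x, norm_sub_sq_real (y - x)]
  ring

theorem linearIndependent_sub_of_odd_integral_sq_dist {ι : Type*} [Fintype ι]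
    (hι : Even (Fintype.card ι)) (x₀ : E) (p : ι → E)
    (h₀ : ∀ i, ∃ m : ℤ, Odd m ∧ dist x₀ (p i) ^ 2 = m)
    (h : Pairwise fun i j => ∃ m : ℤ, Odd m ∧ dist (p i) (p j) ^ 2 = m) :
    LinearIndependent ℝ fun i => p i - x₀ := by
  classical
  -- `round` picks out the integer that a squared distance is known to be
  let r : E → E → ℤ := fun x y => round (dist x y ^ 2)
  have hr {x y : E} {m : ℤ} (hm : dist x y ^ 2 = m) : r x y = m := by simp [r, hm]
  have hr₀ (i : ι) : (r x₀ (p i) : ℝ) = dist x₀ (p i) ^ 2 ∧ Odd (r x₀ (p i)) := by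
    obtain ⟨m, hm, hd⟩ := h₀ i
    simp [hr hd, hd, hm]
  have hrp (i j : ι) : (r (p i) (p j) : ℝ) = dist (p i) (p j) ^ 2 := by
    rcases eq_or_ne i j with rfl | hij
    · simp [r]
    · obtain ⟨m, -, hd⟩ := h hij
      simp [hr hd, hd]
  let N : Matrix ι ι ℤ := of fun i j => r x₀ (p i) + r x₀ (p j) - r (p i) (p j)
  have hN : N.map Int.cast = (2 : ℝ) • gram ℝ (fun i => p i - x₀) := by
    ext i j
    simp [N, gram, two_mul_inner_sub_sub_eq_dist_sq, (hr₀ i).1, (hr₀ j).1, hrp]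
  have hodd : Odd N.det := by
    refine odd_det_of_even_diag_of_odd_offDiag N hι (fun i => ?_) (fun i j hij => ?_)
    · simp [N, r]
    · obtain ⟨m, hm, hd⟩ := h hij
      simpa [N, hr hd] using ((hr₀ i).2.add_odd (hr₀ j).2).sub_odd hm
  refine linearIndependent_of_det_gram_ne_zero fun hdet => ?_
  have hNdet : (N.det : ℝ) = 0 := by rw [Int.cast_det, hN, det_smul, hdet, mul_zero]
  simp [Int.cast_eq_zero.mp hNdet] at hodd

theorem Finset.card_le_finrank_add_two_of_odd_integral_sq_dist [FiniteDimensional ℝ E]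
    (X : Finset E) (h : ∀ x ∈ X, ∀ y ∈ X, x ≠ y → ∃ m : ℤ, Odd m ∧ dist x y ^ 2 = m) :
    #X ≤ finrank ℝ E + 2 := by
  classical
  by_contra! hX
  obtain ⟨x₀, hx₀⟩ : X.Nonempty := card_pos.mp (by omega)
  -- `2 * (d / 2 + 1)` is whichever of `d + 1`, `d + 2` is even
  obtain ⟨S, hSX, hS⟩ := exists_subset_card_eq (s := X.erase x₀)
    (n := 2 * (finrank ℝ E / 2 + 1)) (by rw [card_erase_of_mem hx₀]; omega)
  have hmem (y : S) : (y : E) ∈ X := mem_of_mem_erase (hSX y.2)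
  have hli := linearIndependent_sub_of_odd_integral_sq_dist (by simp [hS]) x₀ ((↑) : S → E)
    (fun y => h _ hx₀ _ (hmem y) (ne_of_mem_erase (hSX y.2)).symm)
    (fun y z hyz => h _ (hmem y) _ (hmem z) (Subtype.coe_injective.ne hyz))
  have := hli.fintype_card_le_finrank
  simp only [Fintype.card_coe, hS] at this
  omega

end

theorem odd_integral_sq_dist_card_le (d : ℕ) (X : Finset (EuclideanSpace ℝ (Fin d)))
    (h : ∀ x ∈ X, ∀ y ∈ X, x ≠ y → ∃ m : ℤ, Odd m ∧ dist x y ^ 2 = (m : ℝ)) :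
    X.card ≤ d + 2 := by
  simpa using X.card_le_finrank_add_two_of_odd_integral_sq_dist h
end

section
/- If X ⊆ ℝ^d is a finite set with |X| = d + 2 such that the squared distance between any two distinct points is an odd integer, then d + 2 ≡ 0 (mod 4). -/
/-! An affine relation `∑ wᵢ pᵢ = 0`, `∑ wᵢ = 0` among `d + 2` points of `ℝ^d` gives a null vector of
the Cayley–Menger matrix `[[0, 1ᵀ], [1, D]]` of their squared-distance matrix `D`. Since `D` is
integral, there is then an integral null vector `(s, c)` with an odd entry. Modulo 2, `D ≡ J - I`,
which forces `s` and all the `cᵢ` to be odd. Writing `D = J - I + 2K` with `K` symmetric with zero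
diagonal, `0 = cᵀDc = -∑ cᵢ² + 2 cᵀKc` and `cᵀKc` is even, so `d + 2 ≡ ∑ cᵢ² ≡ 0 (mod 4)`. -/

open Finset Matrix

section Parity

variable {ι : Type*} [Fintype ι]

theorem even_sum_sum_of_isSymm {M : Matrix ι ι ℤ} (hM : M.IsSymm) (hdiag : ∀ i, M i i = 0) :
    Even (∑ i, ∑ j, M i j) := by
  rw [← ZMod.intCast_eq_zero_iff_even]
  push_cast
  rw [← sum_product']
  refine sum_involution (fun a _ => a.swap) (fun ⟨i, j⟩ _ => ?_) (fun ⟨i, j⟩ _ hne hij => ?_)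
    (by simp) (by simp)
  · simp only [Prod.swap, hM.apply i j]
    exact CharTwo.add_self_eq_zero _
  · obtain rfl : j = i := congrArg Prod.fst hij
    simp [hdiag] at hne

theorem even_dotProduct_mulVec_self {K : Matrix ι ι ℤ} (hK : K.IsSymm) (hdiag : ∀ i, K i i = 0)
    (c : ι → ℤ) : Even (c ⬝ᵥ K *ᵥ c) := by
  have hM : (of fun i j => c i * K i j * c j).IsSymm := by
    ext i j
    simp only [transpose_apply, of_apply, hK.apply i j]
    ring
  convert even_sum_sum_of_isSymm hM (by simp [hdiag]) using 1
  simp [dotProduct, mulVec, mul_sum, mul_assoc]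

theorem dotProduct_self_modEq_card {c : ι → ℤ} (hc : ∀ i, Odd (c i)) :
    c ⬝ᵥ c ≡ Fintype.card ι [ZMOD 4] := by
  calc c ⬝ᵥ c = ∑ i, c i ^ 2 := by simp [dotProduct, sq]
    _ ≡ ∑ _ : ι, 1 [ZMOD 4] := Int.ModEq.sum fun i _ => Int.sq_mod_four_eq_one_of_odd (hc i)
    _ = Fintype.card ι := by simp

end Parity

section CayleyMenger

variable {ι : Type*}

def cayleyMenger {R : Type*} [Zero R] [One R] (D : Matrix ι ι R) :
    Matrix (Unit ⊕ ι) (Unit ⊕ ι) R :=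
  fromBlocks 0 (of fun _ _ => 1) (of fun _ _ => 1) D

theorem cayleyMenger_map {R S : Type*} [Semiring R] [Semiring S] (f : R →+* S) (D : Matrix ι ι R) :
    (cayleyMenger D).map f = cayleyMenger (D.map f) := by
  ext (_ | i) (_ | j) <;> simp [cayleyMenger]

theorem isSymm_of_intCast_eq_dist_sq {α : Type*} [PseudoMetricSpace α] {p : ι → α}
    {D : Matrix ι ι ℤ} (hD : ∀ i j, (D i j : ℝ) = dist (p i) (p j) ^ 2) : D.IsSymm := by
  ext i j
  have hji : (D j i : ℝ) = D i j := by rw [hD, hD, dist_comm]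
  exact_mod_cast hji

theorem diag_eq_zero_of_intCast_eq_dist_sq {α : Type*} [PseudoMetricSpace α] {p : ι → α}
    {D : Matrix ι ι ℤ} (hD : ∀ i j, (D i j : ℝ) = dist (p i) (p j) ^ 2) (i : ι) : D i i = 0 := by
  have hii := hD i i
  rw [dist_self] at hii
  exact_mod_cast hii

variable [Fintype ι]

theorem cayleyMenger_mulVec_eq_zero_iff {R : Type*} [CommRing R] (D : Matrix ι ι R) (s : R)
    (c : ι → R) :
    cayleyMenger D *ᵥ Sum.elim (fun _ => s) c = 0 ↔ ∑ i, c i = 0 ∧ ∀ j, s + (D *ᵥ c) j = 0 := by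
  simp [cayleyMenger, fromBlocks_mulVec, funext_iff, mulVec, dotProduct]

theorem cayleyMenger_mulVec_eq_zero_of_sum_smul_eq_zero {E : Type*} [NormedAddCommGroup E]
    [InnerProductSpace ℝ E] (p : ι → E) {w : ι → ℝ} (hw : ∑ i, w i = 0)
    (hwp : ∑ i, w i • p i = 0) :
    cayleyMenger (of fun i j => dist (p i) (p j) ^ 2) *ᵥ
      Sum.elim (fun _ => -∑ i, w i * ‖p i‖ ^ 2) w = 0 := by
  refine (cayleyMenger_mulVec_eq_zero_iff _ _ _).mpr ⟨hw, fun j => ?_⟩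
  have hinner : ∑ i, w i * inner ℝ (p j) (p i) = 0 := by
    simp [← inner_smul_right, ← inner_sum, hwp]
  simp only [mulVec, dotProduct, of_apply, dist_eq_norm, norm_sub_sq_real]
  rw [neg_add_eq_sub, ← sum_sub_distrib]
  calc ∑ i, ((‖p j‖ ^ 2 - 2 * inner ℝ (p j) (p i) + ‖p i‖ ^ 2) * w i - w i * ‖p i‖ ^ 2)
      = ∑ i, (‖p j‖ ^ 2 * w i - 2 * (w i * inner ℝ (p j) (p i))) :=
        sum_congr rfl fun i _ => by ring
    _ = ‖p j‖ ^ 2 * ∑ i, w i - 2 * ∑ i, w i * inner ℝ (p j) (p i) := by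
        rw [sum_sub_distrib, mul_sum, mul_sum]
    _ = 0 := by rw [hw, hinner]; ring

theorem exists_cayleyMenger_mulVec_eq_zero {E : Type*} [NormedAddCommGroup E]
    [InnerProductSpace ℝ E] [FiniteDimensional ℝ E] {X : Finset E}
    (hX : Module.finrank ℝ E + 1 < X.card) :
    ∃ v, v ≠ 0 ∧ cayleyMenger (of fun i j : X => dist (i : E) j ^ 2) *ᵥ v = 0 := by
  obtain ⟨w, hwX, hw, x, hx, hwx⟩ :=
    Module.exists_nontrivial_relation_sum_zero_of_finrank_succ_lt_card hX
  refine ⟨_, fun h0 => hwx ?_, cayleyMenger_mulVec_eq_zero_of_sum_smul_eq_zero (Subtype.val : X → E)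
    (w := fun i => w i) (by rwa [sum_coe_sort X w]) (by rwa [sum_coe_sort X (fun e => w e • e)])⟩
  simpa using congrFun h0 (Sum.inr ⟨x, hx⟩)

end CayleyMenger

section IntegerKernel

variable {ι : Type*} [Fintype ι]

theorem Matrix.exists_mulVec_eq_zero_of_map_intCast [DecidableEq ι] {K : Type*} [CommRing K] [IsDomain K]
    [CharZero K] {N : Matrix ι ι ℤ} (h : ∃ v, v ≠ 0 ∧ N.map (Int.castRingHom K) *ᵥ v = 0) :
    ∃ v, v ≠ 0 ∧ N *ᵥ v = 0 := by
  rw [exists_mulVec_eq_zero_iff] at h ⊢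
  rw [← RingHom.mapMatrix_apply, ← RingHom.map_det] at h
  simpa using h

theorem Matrix.exists_mulVec_eq_zero_and_odd {κ : Type*} {N : Matrix κ ι ℤ}
    (h : ∃ v, v ≠ 0 ∧ N *ᵥ v = 0) : ∃ v, N *ᵥ v = 0 ∧ ∃ i, Odd (v i) := by
  obtain ⟨v, hv0, hv⟩ := h
  obtain ⟨i, hi⟩ := Function.ne_iff.mp hv0
  obtain ⟨c, hvc, hc⟩ := extract_gcd v (univ_nonempty_iff.mpr ⟨i⟩)
  have hg : univ.gcd v ≠ 0 := fun h0 => hi (gcd_eq_zero_iff.mp h0 i (mem_univ i))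
  refine ⟨c, ?_, ?_⟩
  · have : v = univ.gcd v • c := funext fun j => hvc j (mem_univ j)
    rw [this, mulVec_smul] at hv
    exact (smul_eq_zero.mp hv).resolve_left hg
  · by_contra! heven
    have : (2 : ℤ) ∣ univ.gcd c := dvd_gcd fun j _ => (Int.not_odd_iff_even.mp (heven j)).two_dvd
    rw [hc] at this
    norm_num at this

end IntegerKernel

section OddOffDiag

variable {ι : Type*} [DecidableEq ι] {D : Matrix ι ι ℤ}
  (hdiag : ∀ i, D i i = 0) (hodd : ∀ i j, i ≠ j → Odd (D i j))
include hdiag hodd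

theorem entry_eq_of_odd_offDiag (i j : ι) :
    D i j = 1 - (1 : Matrix ι ι ℤ) i j + 2 * D.map (· / 2) i j := by
  rcases eq_or_ne i j with rfl | hij
  · simp [hdiag]
  · obtain ⟨k, hk⟩ := hodd i j hij
    simp only [map_apply, one_apply_ne hij, hk]
    omega

variable [Fintype ι]

theorem mulVec_eq_of_odd_offDiag (c : ι → ℤ) (j : ι) :
    (D *ᵥ c) j = ∑ i, c i - c j + 2 * (D.map (· / 2) *ᵥ c) j := by
  simp only [mulVec, dotProduct]
  simp_rw [entry_eq_of_odd_offDiag hdiag hodd j, add_mul, sub_mul, sum_add_distrib, sum_sub_distrib,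
    one_apply, ite_mul, one_mul, zero_mul, sum_ite_eq, if_pos (mem_univ j), mul_assoc, ← mul_sum]

theorem odd_iff_of_cayleyMenger_mulVec_eq_zero {s : ℤ} {c : ι → ℤ}
    (hv : cayleyMenger D *ᵥ Sum.elim (fun _ => s) c = 0) (j : ι) : Odd (c j) ↔ Odd s := by
  obtain ⟨hsum, hrow⟩ := (cayleyMenger_mulVec_eq_zero_iff D s c).mp hv
  have hrowj := hrow j
  rw [mulVec_eq_of_odd_offDiag hdiag hodd, hsum] at hrowj
  rw [show c j = s + 2 * (D.map (· / 2) *ᵥ c) j by linarith]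
  simp [Int.odd_add, parity_simps]

theorem four_dvd_card_of_cayleyMenger_mulVec_eq_zero (hsymm : D.IsSymm) {v : Unit ⊕ ι → ℤ}
    (hv : cayleyMenger D *ᵥ v = 0) (hv_odd : ∃ i, Odd (v i)) : 4 ∣ Fintype.card ι := by
  set s := v (Sum.inl ())
  set c := v ∘ Sum.inr
  rw [show v = Sum.elim (fun _ => s) c by ext (_ | _) <;> rfl] at hv hv_odd
  have hs : Odd s := by
    obtain ⟨_ | i, hi⟩ := hv_odd
    exacts [hi, (odd_iff_of_cayleyMenger_mulVec_eq_zero hdiag hodd hv i).mp hi]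
  have hc j : Odd (c j) := (odd_iff_of_cayleyMenger_mulVec_eq_zero hdiag hodd hv j).mpr hs
  obtain ⟨hsum, hrow⟩ := (cayleyMenger_mulVec_eq_zero_iff D s c).mp hv
  have hquad : c ⬝ᵥ D *ᵥ c = 0 := by
    calc c ⬝ᵥ D *ᵥ c = ∑ j, c j * -s :=
          sum_congr rfl fun j _ => by rw [eq_neg_of_add_eq_zero_right (hrow j)]
      _ = 0 := by rw [← sum_mul, hsum, zero_mul]
  have hDc : D *ᵥ c = -c + (2 : ℤ) • (D.map (· / 2) *ᵥ c) := by
    ext j; simp [mulVec_eq_of_odd_offDiag hdiag hodd, hsum]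
  obtain ⟨k, hk⟩ := even_dotProduct_mulVec_self (hsymm.map (· / 2)) (by simp [hdiag]) c
  rw [hDc, dotProduct_add, dotProduct_neg, dotProduct_smul, smul_eq_mul, hk] at hquad
  have h4 : c ⬝ᵥ c ≡ 0 [ZMOD 4] := Int.modEq_zero_iff_dvd.mpr ⟨k, by linarith⟩
  exact_mod_cast Int.modEq_zero_iff_dvd.mp ((dotProduct_self_modEq_card hc).symm.trans h4)

end OddOffDiag

theorem odd_integral_sq_dist_tight_dim (d : ℕ) (X : Finset (EuclideanSpace ℝ (Fin d)))
    (h : ∀ x ∈ X, ∀ y ∈ X, x ≠ y → ∃ m : ℤ, Odd m ∧ dist x y ^ 2 = (m : ℝ))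
    (hcard : X.card = d + 2) :
    (d + 2) % 4 = 0 := by
  classical
  have hD (x y : X) : ∃ m : ℤ, (m : ℝ) = dist (x : EuclideanSpace ℝ (Fin d)) y ^ 2 ∧
      (x ≠ y → Odd m) := by
    by_cases hxy : x = y
    · exact ⟨0, by simp [hxy]⟩
    · obtain ⟨m, hm, hdist⟩ := h x x.2 y y.2 (Subtype.coe_ne_coe.mpr hxy)
      exact ⟨m, hdist.symm, fun _ => hm⟩
  choose D hDdist hDodd using hD
  have hmap : (cayleyMenger (of D)).map (Int.castRingHom ℝ) =
      cayleyMenger (of fun i j : X => dist (i : EuclideanSpace ℝ (Fin d)) j ^ 2) := by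
    rw [cayleyMenger_map]
    congr 1
    ext i j
    simp [hDdist]
  obtain ⟨v, hv, hv_odd⟩ := exists_mulVec_eq_zero_and_odd <| exists_mulVec_eq_zero_of_map_intCast <|
    hmap ▸ exists_cayleyMenger_mulVec_eq_zero (by simp [hcard])
  have := four_dvd_card_of_cayleyMenger_mulVec_eq_zero (diag_eq_zero_of_intCast_eq_dist_sq hDdist)
    hDodd (isSymm_of_intCast_eq_dist_sq hDdist) hv hv_odd
  rw [Fintype.card_coe, hcard] at this
  omega
end

section
/- Let p be a prime and let X ⊆ ℝ^d be a finite set with |X| = d + 2 such that every squared distance between distinct points of X is a rational number whose denominator is coprime to p and whose value is congruent to 1 modulo p (in the localization ℤ_(p)). Then p divides d + 2. -/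
/-!
Enumerate `X` as `x₀, …, x_{d+1}` and let `Dᵢⱼ = ‖xᵢ - xⱼ‖²`. The `d + 1` vectors `xᵢ - x₀` in
`ℝ^d` are linearly dependent, so their Gram matrix is singular; by polarization, twice it is the
matrix `(D₀ᵢ + D₀ⱼ - Dᵢⱼ)ᵢⱼ`. The `Dᵢⱼ` are rationals in `ℤ_(p) ⊆ ℤ_p`, so this determinant also
vanishes in `ℤ_p`, hence in the residue field `𝔽_p`. There every `Dᵢⱼ` with `i ≠ j` is `1`, the
matrix becomes `I + J`, and its determinant is `d + 2`.
-/

open Matrix Module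

namespace Matrix

variable {R S : Type*} [CommRing R] [CommRing S] {n : ℕ}

/-- For `D i j = ‖xᵢ - xⱼ‖²`, polarization makes this twice the Gram matrix of the vectors
`xᵢ₊₁ - x₀`. -/
def gramOfSqDist (D : Fin (n + 1) → Fin (n + 1) → R) : Matrix (Fin n) (Fin n) R :=
  of fun i j => D 0 i.succ + D 0 j.succ - D i.succ j.succ

theorem map_det_gramOfSqDist (f : R →+* S) (D : Fin (n + 1) → Fin (n + 1) → R) :
    f (gramOfSqDist D).det = (gramOfSqDist fun i j => f (D i j)).det := by
  rw [RingHom.map_det]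
  congr 1
  ext i j
  simp [gramOfSqDist]

section InnerProductSpace

variable {E : Type*} [NormedAddCommGroup E] [InnerProductSpace ℝ E]

theorem gramOfSqDist_dist_sq (x : Fin (n + 1) → E) :
    gramOfSqDist (fun i j => dist (x i) (x j) ^ 2) =
      (2 : ℝ) • gram ℝ (fun i => x i.succ - x 0) := by
  ext i j
  simp only [gramOfSqDist, of_apply, smul_apply, gram, smul_eq_mul, dist_eq_norm]
  rw [real_inner_eq_norm_mul_self_add_norm_mul_self_sub_norm_sub_mul_self_div_two,
    sub_sub_sub_cancel_right, norm_sub_rev (x 0), norm_sub_rev (x 0)]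
  ring

theorem det_gramOfSqDist_dist_sq_eq_zero [FiniteDimensional ℝ E] (x : Fin (n + 1) → E)
    (hE : finrank ℝ E < n) :
    (gramOfSqDist fun i j => dist (x i) (x j) ^ 2).det = 0 := by
  rw [gramOfSqDist_dist_sq, det_smul, mul_eq_zero]
  refine .inr (not_ne_iff.mp fun hdet => ?_)
  have hli := det_gram_ne_zero_iff_linearIndependent.mp hdet
  simpa using hE.trans_le' hli.fintype_card_le_finrank

end InnerProductSpace

theorem det_gramOfSqDist_ite_zero_one :
    (gramOfSqDist fun i j : Fin (n + 1) => if i = j then (0 : R) else 1).det = n + 1 := by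
  have hJ : (gramOfSqDist fun i j : Fin (n + 1) => if i = j then (0 : R) else 1) =
      1 + replicateCol (Fin 1) (fun _ : Fin n => (1 : R)) *
        replicateRow (Fin 1) (fun _ : Fin n => (1 : R)) := by
    ext i j
    by_cases hij : i = j <;> simp [gramOfSqDist, mul_apply, hij, Fin.succ_ne_zero, eq_comm]
  rw [hJ]
  refine (det_one_add_replicateCol_mul_replicateRow _ _).trans ?_
  simp [dotProduct, add_comm]

end Matrix

section Padic

variable {p : ℕ} [Fact p.Prime]

theorem PadicInt.exists_coe_eq_div {a b : ℤ} (hb : ¬ (p : ℤ) ∣ b) :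
    ∃ z : ℤ_[p], (z : ℚ_[p]) = a / b ∧ toZMod z = a / b := by
  have hpZ : Prime (p : ℤ) := Nat.prime_iff_prime_int.mp Fact.out
  obtain ⟨u, hu⟩ : IsUnit (b : ℤ_[p]) :=
    isUnit_iff.mpr (norm_intCast_eq_one_iff.mpr (hpZ.coprime_iff_not_dvd.mpr hb).symm)
  have hmul : (a * ↑u⁻¹ : ℤ_[p]) * b = a := by rw [mul_assoc, ← hu, Units.inv_mul, mul_one]
  refine ⟨a * ↑u⁻¹, ?_, ?_⟩
  · have hb0 : b ≠ 0 := by rintro rfl; exact hb (dvd_zero _)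
    rw [eq_div_iff (by exact_mod_cast hb0)]
    exact_mod_cast congrArg ((↑) : ℤ_[p] → ℚ_[p]) hmul
  · rw [eq_div_iff (by rwa [Ne, ZMod.intCast_zmod_eq_zero_iff_dvd])]
    simpa using congrArg toZMod hmul

theorem exists_rat_padicInt_toZMod_eq_one {r : ℝ} {a b : ℤ} (hb : ¬ (p : ℤ) ∣ b)
    (hr : r = a / b) (hab : (p : ℤ) ∣ a - b) :
    ∃ (q : ℚ) (z : ℤ_[p]), r = q ∧ (z : ℚ_[p]) = q ∧ PadicInt.toZMod z = 1 := by
  obtain ⟨z, hz, hz_mod⟩ := PadicInt.exists_coe_eq_div (p := p) hb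
  have hb0 : (b : ZMod p) ≠ 0 := by rwa [Ne, ZMod.intCast_zmod_eq_zero_iff_dvd]
  refine ⟨a / b, z, by push_cast; exact hr, by push_cast; exact hz, ?_⟩
  rwa [hz_mod, div_eq_one_iff_eq hb0, ZMod.intCast_eq_intCast_iff_dvd_sub, ← dvd_neg, neg_sub]

end Padic

theorem mod_p_one_dist_tight_dim (p : ℕ) (hp : p.Prime) (d : ℕ)
    (X : Finset (EuclideanSpace ℝ (Fin d)))
    (h : ∀ x ∈ X, ∀ y ∈ X, x ≠ y →
      ∃ a b : ℤ, ¬ (p : ℤ) ∣ b ∧ dist x y ^ 2 = (a : ℝ) / (b : ℝ) ∧ (p : ℤ) ∣ (a - b))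
    (hcard : X.card = d + 2) :
    p ∣ (d + 2) := by
  have : Fact p.Prime := ⟨hp⟩
  let x : Fin (d + 2) → EuclideanSpace ℝ (Fin d) :=
    fun i => (X.equivFin.trans (finCongr hcard)).symm i
  have hx_inj : x.Injective := Subtype.coe_injective.comp (Equiv.injective _)
  have hlift : ∀ i j, ∃ (q : ℚ) (z : ℤ_[p]), dist (x i) (x j) ^ 2 = q ∧
      (z : ℚ_[p]) = q ∧ PadicInt.toZMod z = if i = j then 0 else 1 := by
    intro i j
    by_cases hij : i = j
    · exact ⟨0, 0, by simp [hij]⟩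
    obtain ⟨a, b, hb, hdist, hab⟩ := h _ (Subtype.prop _) _ (Subtype.prop _) (hx_inj.ne hij)
    simpa only [if_neg hij] using exists_rat_padicInt_toZMod_eq_one hb hdist hab
  choose q z hq hz hz_mod using hlift
  have hdetQ : (gramOfSqDist q).det = 0 := by
    rw [← map_eq_zero_iff _ (Rat.castHom ℝ).injective, map_det_gramOfSqDist]
    simpa [hq] using det_gramOfSqDist_dist_sq_eq_zero x (by simp)
  have hdetZ : (gramOfSqDist z).det = 0 := by
    rw [← map_eq_zero_iff _ (IsFractionRing.injective ℤ_[p] ℚ_[p]), map_det_gramOfSqDist]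
    have hdetQp := congrArg (Rat.castHom ℚ_[p]) hdetQ
    rw [map_det_gramOfSqDist, map_zero] at hdetQp
    simpa [PadicInt.algebraMap_apply, hz] using hdetQp
  have hdetZMod := congrArg PadicInt.toZMod hdetZ
  rw [map_det_gramOfSqDist, map_zero] at hdetZMod
  simp_rw [hz_mod, det_gramOfSqDist_ite_zero_one] at hdetZMod
  rw [← ZMod.natCast_eq_zero_iff, ← hdetZMod]
  push_cast
  ring
end

section
/- Let d ≥ 1 and suppose d + 2 ≡ 0 (mod p) for an odd prime p. Then the set X = {(1/√2)e_1, …, (1/√2)e_d, (1/√2)x, (1/√2)y} ⊆ ℝ^d, where x = (α,…,α), y = (β,…,β), α = (1+√(d+1))/d, β = (1−√(d+1))/d, has d+2 points whose set of squared distances is {1, 1 + (d+2)/d}; in particular every squared distance lies in ℤ_(p) and is congruent to 1 modulo p. -/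
/-!
The numbers α and β are the two roots of `d t² - 2t - 1`, which is exactly the condition for
`x/√2` and `y/√2` to lie at squared distance `(1 - 2t + d t²)/2 = 1` from every `eᵢ/√2`; the basis
points are at squared distance `1` from each other, and `x/√2, y/√2` at squared distance
`d (α - β)² / 2 = 2(d + 1)/d = 1 + (d + 2)/d`. Writing this as `(2d + 2)/d`, the denominator is
prime to `p` (an odd prime dividing `d + 2` cannot divide `d`) and `(2d + 2) - d = d + 2`.
-/

namespace EuclideanSpace

variable {ι : Type*} [Fintype ι]

theorem real_inner_single_const [DecidableEq ι] (i : ι) (a c : ℝ) :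
    inner ℝ (single i a) (WithLp.toLp 2 (fun _ : ι => c) : EuclideanSpace ℝ ι) = a * c := by
  simp [inner_single_left]

theorem norm_const_sq (c : ℝ) :
    ‖(WithLp.toLp 2 (fun _ : ι => c) : EuclideanSpace ℝ ι)‖ ^ 2 = Fintype.card ι * c ^ 2 := by
  simp [real_norm_sq_eq]

theorem dist_single_single_sq [DecidableEq ι] {i j : ι} (hij : i ≠ j) :
    dist (single i (1 : ℝ)) (single j 1) ^ 2 = 2 := by
  rw [dist_eq_norm, norm_sub_sq_real, orthonormal_single.inner_eq_zero hij]
  simp only [PiLp.norm_single]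
  norm_num

theorem dist_single_const_sq [DecidableEq ι] (i : ι) (c : ℝ) :
    dist (single i (1 : ℝ)) (WithLp.toLp 2 (fun _ : ι => c)) ^ 2
      = 1 - 2 * c + Fintype.card ι * c ^ 2 := by
  rw [dist_eq_norm, norm_sub_sq_real, real_inner_single_const, norm_const_sq, PiLp.norm_single]
  norm_num

theorem dist_const_const_sq (a b : ℝ) :
    dist (WithLp.toLp 2 (fun _ : ι => a) : EuclideanSpace ℝ ι) (WithLp.toLp 2 fun _ => b) ^ 2
      = Fintype.card ι * (a - b) ^ 2 := by
  rw [dist_eq_norm, ← WithLp.toLp_sub]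
  exact norm_const_sq (a - b)

end EuclideanSpace

theorem dist_inv_sqrt_two_smul_sq {E : Type*} [SeminormedAddCommGroup E] [NormedSpace ℝ E]
    (x y : E) : dist ((√2)⁻¹ • x) ((√2)⁻¹ • y) ^ 2 = dist x y ^ 2 / 2 := by
  rw [dist_smul₀, mul_pow, Real.norm_eq_abs, sq_abs, inv_pow, Real.sq_sqrt zero_le_two]
  ring

theorem one_sub_two_mul_add_mul_sq_eq_two {d s : ℝ} (hd : d ≠ 0) (hs : s ^ 2 = d + 1) :
    1 - 2 * ((1 + s) / d) + d * ((1 + s) / d) ^ 2 = 2 := by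
  field_simp
  linear_combination hs

theorem mul_sub_sq_div_two_eq {d s : ℝ} (hd : d ≠ 0) (hs : s ^ 2 = d + 1) :
    d * ((1 + s) / d - (1 - s) / d) ^ 2 / 2 = 1 + (d + 2) / d := by
  field_simp
  linear_combination 4 * hs

noncomputable def tightPoint (d : ℕ) (α β : ℝ) (i : Fin (d + 2)) : EuclideanSpace ℝ (Fin d) :=
  if h : (i : ℕ) < d then (√2)⁻¹ • EuclideanSpace.single ⟨i, h⟩ 1
  else if (i : ℕ) = d then (√2)⁻¹ • WithLp.toLp 2 (fun _ => α)
  else (√2)⁻¹ • WithLp.toLp 2 (fun _ => β)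

theorem dist_tightPoint_sq_mem {d : ℕ} {α β : ℝ} (hα : 1 - 2 * α + d * α ^ 2 = 2)
    (hβ : 1 - 2 * β + d * β ^ 2 = 2) {i j : Fin (d + 2)} (hij : i ≠ j) :
    dist (tightPoint d α β i) (tightPoint d α β j) ^ 2 ∈ ({1, d * (α - β) ^ 2 / 2} : Set ℝ) := by
  wlog hlt : i < j generalizing i j
  · rw [dist_comm]
    exact this hij.symm (lt_of_le_of_ne (not_lt.mp hlt) hij.symm)
  rw [Fin.lt_def] at hlt
  simp only [tightPoint, Set.mem_insert_iff, Set.mem_singleton_iff]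
  rcases lt_trichotomy (j : ℕ) d with hj | hj | hj
  · have hne : (⟨i, hlt.trans hj⟩ : Fin d) ≠ ⟨j, hj⟩ := fun h => hij (Fin.ext (Fin.mk.inj h))
    rw [dif_pos (hlt.trans hj), dif_pos hj, dist_inv_sqrt_two_smul_sq,
      EuclideanSpace.dist_single_single_sq hne]
    norm_num
  · rw [dif_pos (by omega), dif_neg (not_lt.mpr hj.ge), if_pos hj, dist_inv_sqrt_two_smul_sq,
      EuclideanSpace.dist_single_const_sq, Fintype.card_fin, hα]
    norm_num
  · have hj' : ¬ (j : ℕ) < d ∧ (j : ℕ) ≠ d := ⟨not_lt.mpr hj.le, hj.ne'⟩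
    rcases Nat.lt_or_ge (i : ℕ) d with hi | hi
    · rw [dif_pos hi, dif_neg hj'.1, if_neg hj'.2, dist_inv_sqrt_two_smul_sq,
        EuclideanSpace.dist_single_const_sq, Fintype.card_fin, hβ]
      norm_num
    · have hi : (i : ℕ) = d := by omega
      rw [dif_neg hi.not_lt, if_pos hi, dif_neg hj'.1, if_neg hj'.2, dist_inv_sqrt_two_smul_sq,
        EuclideanSpace.dist_const_const_sq, Fintype.card_fin]
      exact Or.inr (by ring)

theorem Nat.Prime.not_dvd_of_dvd_add_two {p n : ℕ} (hp : p.Prime) (hodd : Odd p) (h : p ∣ n + 2) :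
    ¬ p ∣ n := fun hn => by
  have h2 : p ≤ 2 := Nat.le_of_dvd two_pos ((Nat.dvd_add_right hn).mp h)
  have := hp.two_le
  have := Nat.odd_iff.mp hodd
  omega

theorem tight_example_odd_prime (p d : ℕ) (hp : p.Prime) (hodd : Odd p) (hd : 1 ≤ d)
    (hdp : p ∣ (d + 2))
    (α β : ℝ) (hα : α = (1 + Real.sqrt (d + 1)) / d) (hβ : β = (1 - Real.sqrt (d + 1)) / d)
    (pts : Fin (d + 2) → EuclideanSpace ℝ (Fin d))
    (hpts : ∀ i : Fin (d + 2), pts i =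
      if h : (i : ℕ) < d then (Real.sqrt 2)⁻¹ • EuclideanSpace.single ⟨(i : ℕ), h⟩ (1 : ℝ)
      else if (i : ℕ) = d then (Real.sqrt 2)⁻¹ • (WithLp.toLp 2 (fun _ => α) : EuclideanSpace ℝ (Fin d))
      else (Real.sqrt 2)⁻¹ • (WithLp.toLp 2 (fun _ => β) : EuclideanSpace ℝ (Fin d))) :
    Function.Injective pts ∧
    (∀ i j : Fin (d + 2), i ≠ j →
      dist (pts i) (pts j) ^ 2 ∈ ({1, 1 + ((d : ℝ) + 2) / d} : Set ℝ)) ∧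
    (∀ q ∈ ({1, 1 + ((d : ℚ) + 2) / d} : Set ℚ),
      ∃ a b : ℤ, ¬ (p : ℤ) ∣ b ∧ q = (a : ℚ) / (b : ℚ) ∧ (p : ℤ) ∣ (a - b)) := by
  obtain rfl : pts = tightPoint d α β := funext hpts
  have hd0 : (d : ℝ) ≠ 0 := Nat.cast_ne_zero.mpr (Nat.one_le_iff_ne_zero.mp hd)
  have hs : √((d : ℝ) + 1) ^ 2 = d + 1 := Real.sq_sqrt (by positivity)
  have hαroot : 1 - 2 * α + d * α ^ 2 = 2 := hα ▸ one_sub_two_mul_add_mul_sq_eq_two hd0 hs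
  have hβroot : 1 - 2 * β + d * β ^ 2 = 2 := by
    simpa only [hβ, ← sub_eq_add_neg] using
      one_sub_two_mul_add_mul_sq_eq_two hd0 (s := -√((d : ℝ) + 1)) (by rw [neg_sq, hs])
  have hdist : ∀ i j : Fin (d + 2), i ≠ j →
      dist (tightPoint d α β i) (tightPoint d α β j) ^ 2 ∈ ({1, 1 + ((d : ℝ) + 2) / d} : Set ℝ) := by
    intro i j hij
    simpa only [hα, hβ, mul_sub_sq_div_two_eq hd0 hs] using
      dist_tightPoint_sq_mem hαroot hβroot hij
  have hpos : ∀ r ∈ ({1, 1 + ((d : ℝ) + 2) / d} : Set ℝ), 0 < r := by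
    rintro r (rfl | rfl) <;> positivity
  refine ⟨fun i j h => ?_, hdist, ?_⟩
  · by_contra hne
    have := hpos _ (hdist i j hne)
    rw [h, dist_self] at this
    norm_num at this
  · rintro q (rfl | rfl)
    · exact ⟨1, 1, by exact_mod_cast hp.not_dvd_one, by simp, by simp⟩
    · refine ⟨2 * d + 2, d, by exact_mod_cast hp.not_dvd_of_dvd_add_two hodd hdp, ?_, ?_⟩
      · push_cast
        field_simp
        ring
      · have : (2 * d + 2 : ℤ) - d = (d + 2 : ℕ) := by push_cast; ring
        rw [this]
        exact_mod_cast hdp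
end

section
/- Let n be odd and M an (n×n) symmetric matrix over a commutative ring. Then the coefficient of x in the polynomial f(x) = det(M with entries (i,j) and (j,i) replaced by x), for fixed i ≠ j, is divisible by 2 in the ring. -/
open Polynomial in
theorem symm_replace_coeff_one_even (R : Type*) [CommRing R] (n : ℕ) (hn : Odd n)
    (M : Matrix (Fin n) (Fin n) R) (hM : M.IsSymm) (i j : Fin n) (hij : i ≠ j)
    (N : Matrix (Fin n) (Fin n) R[X])
    (hN : ∀ k l, N k l = if (k = i ∧ l = j) ∨ (k = j ∧ l = i) then X else C (M k l)) :
    ∃ b' : R, N.det.coeff 1 = 2 * b' := by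
  classical
  set A : Matrix (Fin n) (Fin n) R[X] :=
    Matrix.of fun k l => if (k = i ∧ l = j) ∨ (k = j ∧ l = i) then 0 else C (M k l) with hA
  -- A is symmetric
  have hMsymm : ∀ k l, M l k = M k l := fun k l => by
    conv_lhs => rw [← hM]
    rfl
  have hAsymm : A.transpose = A := by
    ext k l
    have hcond : ((l = i ∧ k = j) ∨ (l = j ∧ k = i)) ↔ ((k = i ∧ l = j) ∨ (k = j ∧ l = i)) := by
      tauto
    simp only [hA, Matrix.transpose_apply, Matrix.of_apply, if_congr hcond rfl rfl, hMsymm]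
  -- rewrite N via row updates
  have hNrow : N = (A.updateRow i ((X : R[X]) • ((Pi.single j 1 : Fin n → R[X])) + A i)).updateRow j
      ((X : R[X]) • ((Pi.single i 1 : Fin n → R[X])) + A j) := by
    ext k l
    rw [hN]
    rcases eq_or_ne k j with rfl | hkj
    · rw [Matrix.updateRow_self]
      rcases eq_or_ne l i with rfl | hli
      · simp [hij, hij.symm, hA]
      · simp [hli, hA, Ne.symm hli, hij.symm, Pi.single_apply]
    · rw [Matrix.updateRow_ne hkj]
      rcases eq_or_ne k i with rfl | hki
      · rw [Matrix.updateRow_self]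
        rcases eq_or_ne l j with rfl | hlj
        · simp [hij, hA]
        · simp [hlj, hA, Ne.symm hlj, hij, Pi.single_apply]
      · rw [Matrix.updateRow_ne hki]
        simp [hA, hki, hkj]
  -- expand determinant
  have hupd_comm : ∀ (r s : Fin n → R[X]),
      (A.updateRow i r).updateRow j s = (A.updateRow j s).updateRow i r := fun r s => by
    ext k l
    rcases eq_or_ne k j with rfl | hkj <;> rcases eq_or_ne k i with rfl | hki <;>
      simp_all [Matrix.updateRow_apply]
  have e1 : (A.updateRow i ((X : R[X]) • ((Pi.single j 1 : Fin n → R[X])) + A i)) j = A j :=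
    Matrix.updateRow_ne hij.symm
  have e2 : (A.updateRow j (Pi.single i 1)) i = A i :=
    Matrix.updateRow_ne hij
  have hdet : N.det = X * (X * ((A.updateRow i (Pi.single j 1)).updateRow j (Pi.single i 1)).det)
      + (X * (A.updateRow j (Pi.single i 1)).det + X * (A.updateRow i (Pi.single j 1)).det
        + A.det) := by
    rw [hNrow, Matrix.det_updateRow_add, Matrix.det_updateRow_smul, ← e1,
      Matrix.updateRow_eq_self, Matrix.det_updateRow_add, Matrix.det_updateRow_smul,
      Matrix.updateRow_eq_self, hupd_comm, Matrix.det_updateRow_add, Matrix.det_updateRow_smul,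
      ← e2, Matrix.updateRow_eq_self]
    rw [hupd_comm]
    push_cast [smul_eq_mul]
    ring
  -- coefficient computation
  have hcoeffA : ∀ (B : Matrix (Fin n) (Fin n) R[X]),
      (∀ k l, ∃ r : R, B k l = C r) → ∃ r : R, B.det = C r := by
    intro B hB
    choose f hf using hB
    refine ⟨(Matrix.of f).det, ?_⟩
    have : B = (C : R →+* R[X]).mapMatrix (Matrix.of f) := by
      ext k l
      simp [hf k l]
    rw [this, ← RingHom.map_det]
  obtain ⟨d1, hd1⟩ := hcoeffA (A.updateRow i (Pi.single j 1)) (by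
    intro k l
    rcases eq_or_ne k i with rfl | hk
    · rw [Matrix.updateRow_self]
      rcases eq_or_ne l j with rfl | hl
      · exact ⟨1, by simp [Pi.single_apply]⟩
      · exact ⟨0, by simp [Pi.single_apply, hl]⟩
    · rw [Matrix.updateRow_ne hk]
      by_cases h : (k = i ∧ l = j) ∨ (k = j ∧ l = i)
      · exact ⟨0, by simp [hA, h]⟩
      · exact ⟨M k l, by simp [hA, h]⟩)
  obtain ⟨d2, hd2⟩ := hcoeffA (A.updateRow j (Pi.single i 1)) (by
    intro k l
    rcases eq_or_ne k j with rfl | hk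
    · rw [Matrix.updateRow_self]
      rcases eq_or_ne l i with rfl | hl
      · exact ⟨1, by simp [Pi.single_apply]⟩
      · exact ⟨0, by simp [Pi.single_apply, hl]⟩
    · rw [Matrix.updateRow_ne hk]
      by_cases h : (k = i ∧ l = j) ∨ (k = j ∧ l = i)
      · exact ⟨0, by simp [hA, h]⟩
      · exact ⟨M k l, by simp [hA, h]⟩)
  obtain ⟨a0, ha0⟩ := hcoeffA A (by
    intro k l
    by_cases h : (k = i ∧ l = j) ∨ (k = j ∧ l = i)
    · exact ⟨0, by simp [hA, h]⟩
    · exact ⟨M k l, by simp [hA, h]⟩)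
  -- equality of the two cofactors, via adjugate symmetry
  have hadj : (A.updateRow i (Pi.single j 1)).det = (A.updateRow j (Pi.single i 1)).det := by
    have h1 : (A.updateRow i (Pi.single j 1)).det = A.adjugate j i :=
      (Matrix.adjugate_apply A j i).symm
    have h2 : (A.updateRow j (Pi.single i 1)).det = A.adjugate i j :=
      (Matrix.adjugate_apply A i j).symm
    have h3 : A.adjugate j i = A.adjugate i j := by
      conv_lhs => rw [← hAsymm, ← Matrix.adjugate_transpose]
      rfl
    rw [h1, h2, h3]
  refine ⟨d1, ?_⟩
  have hd21 : d2 = d1 := by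
    have := hadj
    rw [hd1, hd2] at this
    exact C_injective this.symm
  rw [hdet, hd1, hd2, ha0, hd21]
  simp [coeff_X_mul, coeff_C, Polynomial.mul_coeff_zero, two_mul]
end

section
/- Let n be odd and M an (n×n) symmetric matrix over a commutative ring whose diagonal entries all lie in the ideal 2R. Then for fixed i ≠ j, the coefficient of x² in f(x) = det(M with (i,j) and (j,i) entries replaced by x) lies in 2R. -/
open Polynomial

lemma det_zero_of_alt {S : Type*} [CommRing S] (h2 : (2 : S) = 0) {n : ℕ} (hn : Odd n)
    (A : Matrix (Fin n) (Fin n) S) (hsymm : ∀ a b, A a b = A b a)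
    (hdiag : ∀ k, A k k = 0) : A.det = 0 := by
  rw [Matrix.det_apply]
  apply Finset.sum_involution (fun σ _ => σ⁻¹)
  · intro σ _
    have hp : (∏ k, A (σ⁻¹ k) k) = ∏ k, A (σ k) k := by
      calc (∏ k, A (σ⁻¹ k) k) = ∏ k, A (σ⁻¹ (σ k)) (σ k) := (Equiv.prod_comp σ _).symm
      _ = ∏ k, A k (σ k) := by simp
      _ = ∏ k, A (σ k) k := by simp_rw [hsymm]
    have h0 : (∏ k, A (σ k) k) + ∏ k, A (σ k) k = 0 := by
      rw [← two_mul, h2, zero_mul]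
    rw [map_inv, hp, Int.units_inv_eq_self, ← smul_add, h0, smul_zero]
  · intro σ _ hf hcon
    apply hf
    have hσ2 : σ ^ 2 ^ 1 = 1 := by
      rw [pow_one, sq]; nth_rewrite 1 [← hcon]; exact inv_mul_cancel σ
    have : ¬ (2 ∣ Fintype.card (Fin n)) := by
      simpa [Fintype.card_fin, Nat.two_dvd_ne_zero] using Nat.odd_iff.mp hn
    obtain ⟨k, hk⟩ := Equiv.Perm.exists_fixed_point_of_prime this hσ2
    have : (∏ i, A (σ i) i) = 0 :=
      Finset.prod_eq_zero (Finset.mem_univ k) (by rw [hk, hdiag])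
    rw [this, smul_zero]
  · intro σ _; exact inv_inv σ
  · intro σ _; exact Finset.mem_univ _

open Polynomial in
theorem symm_replace_coeff_two_even (R : Type*) [CommRing R] (n : ℕ) (hn : Odd n)
    (M : Matrix (Fin n) (Fin n) R) (hM : M.IsSymm)
    (hdiag : ∀ k, ∃ c : R, M k k = 2 * c)
    (i j : Fin n) (hij : i ≠ j)
    (N : Matrix (Fin n) (Fin n) R[X])
    (hN : ∀ k l, N k l = if (k = i ∧ l = j) ∨ (k = j ∧ l = i) then X else C (M k l)) :
    ∃ a' : R, N.det.coeff 2 = 2 * a' := by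
  set I : Ideal R := Ideal.span {(2 : R)} with hI
  let q : R →+* R ⧸ I := Ideal.Quotient.mk I
  have hq2 : q 2 = 0 := Ideal.Quotient.eq_zero_iff_mem.mpr (Ideal.mem_span_singleton_self 2)
  let φ : R[X] →+* (R ⧸ I)[X] := Polynomial.mapRingHom q
  have h2S : (2 : R ⧸ I) = 0 := by
    have := hq2; rwa [map_ofNat] at this
  have h2 : (2 : (R ⧸ I)[X]) = 0 := by
    rw [← map_ofNat (Polynomial.C (R := R ⧸ I)) 2, h2S, map_zero]
  have hNsymm : ∀ a b, N a b = N b a := by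
    intro a b
    rw [hN, hN]
    by_cases h : (a = i ∧ b = j) ∨ (a = j ∧ b = i)
    · rw [if_pos h, if_pos (by tauto)]
    · rw [if_neg h, if_neg (by tauto)]
      congr 1
      exact Matrix.IsSymm.apply hM b a
  have hAdet : (N.map φ).det = 0 := by
    apply det_zero_of_alt h2 hn
    · intro a b
      simp only [Matrix.map_apply]
      rw [hNsymm]
    · intro k
      have hk : N k k = C (M k k) := by
        rw [hN, if_neg]
        rintro (⟨h1, h2⟩ | ⟨h1, h2⟩) <;> exact hij (h1 ▸ h2 ▸ rfl)
      obtain ⟨c, hc⟩ := hdiag k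
      have : q (M k k) = 0 := by rw [hc, map_mul, hq2, zero_mul]
      simp only [Matrix.map_apply, hk, φ, Polynomial.coe_mapRingHom, Polynomial.map_C, this,
        Polynomial.C_0]
  have hmap : φ N.det = 0 := by
    rw [RingHom.map_det]; exact hAdet
  have hc2 : q (N.det.coeff 2) = 0 := by
    have := congrArg (fun p => Polynomial.coeff p 2) hmap
    simpa [φ, Polynomial.coeff_map] using this
  obtain ⟨a, ha⟩ := Ideal.mem_span_singleton'.mp (Ideal.Quotient.eq_zero_iff_mem.mp hc2)
  exact ⟨a, by rw [← ha, mul_comm]⟩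
end

section
/- Let X be a finite set in ℝ^d whose pairwise squared distances all lie in an algebraic number field K ⊆ ℝ. Then there exists a finite extension field L of K and a congruent copy of X (an isometric embedding of X into ℝ^n for n = |X|) such that every coordinate of every point lies in L. -/
/-!
Move one point `x₀` of `X` to the origin. By polarization the Gram matrix of the vectors
`x - x₀` has entries in `K`, and Gram–Schmidt writes every orthogonal vector `vₖ` it produces as a
`K`-linear combination of them, so `‖vₖ‖² ∈ K`. The coordinates of `x - x₀` in the orthonormal
system `vₖ / ‖vₖ‖` therefore lie in `K(‖v₀‖, …, ‖vₙ₋₁‖)`, a finite extension of `K` obtained by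
adjoining square roots.
-/

open InnerProductSpace RealInnerProductSpace Submodule Set

variable {E : Type*} [NormedAddCommGroup E] [InnerProductSpace ℝ E]

section GramField

variable {ι : Type*} {F : IntermediateField ℚ ℝ} {u : ι → E}

theorem inner_mem_of_mem_span (hu : ∀ i j, ⟪u i, u j⟫ ∈ F) {x y : E}
    (hx : x ∈ span F (range u)) (hy : y ∈ span F (range u)) : ⟪x, y⟫ ∈ F := by
  have inner_left_mem : ∀ i, ⟪u i, y⟫ ∈ F := fun i => by
    induction hy using span_induction with
    | mem _ h => obtain ⟨j, rfl⟩ := h; exact hu i j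
    | zero => simp
    | add _ _ _ _ h₁ h₂ => rw [inner_add_right]; exact add_mem h₁ h₂
    | smul c _ _ h => rw [IntermediateField.smul_def, real_inner_smul_right]; exact mul_mem c.2 h
  induction hx using span_induction with
  | mem _ h => obtain ⟨i, rfl⟩ := h; exact inner_left_mem i
  | zero => simp
  | add _ _ _ _ h₁ h₂ => rw [inner_add_left]; exact add_mem h₁ h₂
  | smul c _ _ h => rw [IntermediateField.smul_def, real_inner_smul_left]; exact mul_mem c.2 h

variable [LinearOrder ι] [LocallyFiniteOrderBot ι] [WellFoundedLT ι]

theorem gramSchmidt_mem_span_of_inner_mem (hu : ∀ i j, ⟪u i, u j⟫ ∈ F) (n : ι) :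
    gramSchmidt ℝ u n ∈ span F (range u) := by
  induction n using WellFoundedLT.induction with
  | _ n ih =>
  rw [gramSchmidt_def]
  refine sub_mem (subset_span ⟨n, rfl⟩) (sum_mem fun i hi => ?_)
  have hi := ih i (Finset.mem_Iio.mp hi)
  have hcoeff : ⟪gramSchmidt ℝ u i, u n⟫ / ‖gramSchmidt ℝ u i‖ ^ 2 ∈ F := by
    rw [← real_inner_self_eq_norm_sq]
    exact div_mem (inner_mem_of_mem_span hu hi (subset_span ⟨n, rfl⟩))
      (inner_mem_of_mem_span hu hi hi)
  rw [starProjection_singleton]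
  exact smul_mem _ (⟨_, hcoeff⟩ : F) hi

theorem sq_norm_gramSchmidt_mem (hu : ∀ i j, ⟪u i, u j⟫ ∈ F) (n : ι) :
    ‖gramSchmidt ℝ u n‖ ^ 2 ∈ F := by
  have hn := gramSchmidt_mem_span_of_inner_mem hu n
  rw [← real_inner_self_eq_norm_sq]
  exact inner_mem_of_mem_span hu hn hn

theorem inner_gramSchmidtNormed_mem (hu : ∀ i j, ⟪u i, u j⟫ ∈ F) {n : ι}
    (hn : ‖gramSchmidt ℝ u n‖ ∈ F) (i : ι) : ⟪gramSchmidtNormed ℝ u n, u i⟫ ∈ F := by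
  rw [gramSchmidtNormed, real_inner_smul_left]
  exact mul_mem (inv_mem (by simpa using hn))
    (inner_mem_of_mem_span hu (gramSchmidt_mem_span_of_inner_mem hu n) (subset_span ⟨i, rfl⟩))

end GramField

section InnerCoords

variable {ι : Type*} {e : ι → E}

noncomputable def innerCoords (e : ι → E) (x : E) : EuclideanSpace ℝ ι :=
  WithLp.toLp 2 fun k => ⟪e k, x⟫

theorem innerCoords_sub (e : ι → E) (x y : E) :
    innerCoords e x - innerCoords e y = innerCoords e (x - y) := by
  ext k; simp [innerCoords, inner_sub_right]

theorem norm_innerCoords [Fintype ι] (horth : Pairwise fun i j => ⟪e i, e j⟫ = 0)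
    (hnorm : ∀ i, e i ≠ 0 → ‖e i‖ = 1) {x : E} (hx : x ∈ span ℝ (range e)) :
    ‖innerCoords e x‖ = ‖x‖ := by
  obtain ⟨c, rfl⟩ := (mem_span_range_iff_exists_fun ℝ).mp hx
  have hcoord : ∀ k, ⟪e k, ∑ a, c a • e a⟫ = c k * ‖e k‖ ^ 2 := fun k => by
    rw [inner_sum, Finset.sum_eq_single k (fun a _ hak => by
      rw [real_inner_smul_right, horth hak.symm, mul_zero]) (by simp),
      real_inner_smul_right, real_inner_self_eq_norm_sq]
  have hidem : ∀ k, (‖e k‖ ^ 2) ^ 2 = ‖e k‖ ^ 2 := fun k => by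
    by_cases hk : e k = 0
    · simp [hk]
    · simp [hnorm k hk]
  rw [← sq_eq_sq₀ (norm_nonneg _) (norm_nonneg _), EuclideanSpace.norm_sq_eq,
    ← real_inner_self_eq_norm_sq, sum_inner]
  refine Finset.sum_congr rfl fun k _ => ?_
  simp only [innerCoords, PiLp.toLp_apply, Real.norm_eq_abs, sq_abs, real_inner_smul_left, hcoord]
  linear_combination c k ^ 2 * hidem k

theorem dist_innerCoords [Fintype ι] (horth : Pairwise fun i j => ⟪e i, e j⟫ = 0)
    (hnorm : ∀ i, e i ≠ 0 → ‖e i‖ = 1) {x y : E} (hxy : x - y ∈ span ℝ (range e)) :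
    dist (innerCoords e x) (innerCoords e y) = dist x y := by
  rw [dist_eq_norm, dist_eq_norm, innerCoords_sub, norm_innerCoords horth hnorm hxy]

theorem dist_innerCoords_gramSchmidtNormed [LinearOrder ι] [LocallyFiniteOrderBot ι]
    [WellFoundedLT ι] [Fintype ι] {u : ι → E} {x y : E} (hxy : x - y ∈ span ℝ (range u)) :
    dist (innerCoords (gramSchmidtNormed ℝ u) x) (innerCoords (gramSchmidtNormed ℝ u) y) =
      dist x y := by
  refine dist_innerCoords (fun i j hij => ?_) (fun _ hk => gramSchmidtNormed_unit_length' hk) ?_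
  · simp [gramSchmidtNormed, real_inner_smul_left, real_inner_smul_right,
      gramSchmidt_orthogonal ℝ u hij]
  · rwa [span_gramSchmidtNormed_range, span_gramSchmidt]

end InnerCoords

theorem isIntegral_of_pow_mem {F A : Type*} [Field F] [Field A] [Algebra F A]
    (K : IntermediateField F A) [FiniteDimensional F K] {x : A} {n : ℕ} (hn : n ≠ 0)
    (hx : x ^ n ∈ K) : IsIntegral F x :=
  IsIntegral.of_pow (Nat.pos_of_ne_zero hn)
    (by simpa using (IsIntegral.of_finite F (⟨_, hx⟩ : K)).map K.val)

theorem exists_finiteDimensional_inner_gramSchmidtNormed_mem {ι : Type*} [LinearOrder ι]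
    [LocallyFiniteOrderBot ι] [WellFoundedLT ι] [Finite ι] (K : IntermediateField ℚ ℝ)
    [FiniteDimensional ℚ K] {u : ι → E} (hu : ∀ i j, ⟪u i, u j⟫ ∈ K) :
    ∃ L : IntermediateField ℚ ℝ, FiniteDimensional ℚ L ∧ K ≤ L ∧
      ∀ k i, ⟪gramSchmidtNormed ℝ u k, u i⟫ ∈ L := by
  set N := IntermediateField.adjoin ℚ (range fun k => ‖gramSchmidt ℝ u k‖)
  have : FiniteDimensional ℚ N := IntermediateField.finiteDimensional_adjoin <| by
    rintro _ ⟨k, rfl⟩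
    exact isIntegral_of_pow_mem K two_ne_zero (sq_norm_gramSchmidt_mem hu k)
  refine ⟨K ⊔ N, IntermediateField.finiteDimensional_sup _ _, le_sup_left, fun k i => ?_⟩
  exact inner_gramSchmidtNormed_mem (fun i j => (le_sup_left : K ≤ K ⊔ N) (hu i j))
    ((le_sup_right : N ≤ K ⊔ N) (IntermediateField.subset_adjoin ℚ _ ⟨k, rfl⟩)) i

theorem inner_sub_sub_eq_dist_sq (x y z : E) :
    ⟪x - z, y - z⟫ = (dist x z ^ 2 + dist y z ^ 2 - dist x y ^ 2) / 2 := by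
  rw [real_inner_eq_norm_mul_self_add_norm_mul_self_sub_norm_sub_mul_self_div_two,
    sub_sub_sub_cancel_right, dist_eq_norm, dist_eq_norm, dist_eq_norm]
  ring

theorem inner_sub_sub_mem {F : IntermediateField ℚ ℝ} {S : Set E}
    (hS : ∀ x ∈ S, ∀ y ∈ S, x ≠ y → dist x y ^ 2 ∈ F) {x y z : E} (hx : x ∈ S) (hy : y ∈ S)
    (hz : z ∈ S) : ⟪x - z, y - z⟫ ∈ F := by
  have hdist : ∀ a ∈ S, ∀ b ∈ S, dist a b ^ 2 ∈ F := fun a ha b hb => by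
    rcases eq_or_ne a b with rfl | hab
    · simp
    · exact hS a ha b hb hab
  rw [inner_sub_sub_eq_dist_sq]
  exact div_mem (sub_mem (add_mem (hdist x hx z hz) (hdist y hy z hz)) (hdist x hx y hy))
    (by simp)

theorem exists_coords_in_finite_extension (K : IntermediateField ℚ ℝ) [FiniteDimensional ℚ K]
    (d : ℕ) (X : Finset (EuclideanSpace ℝ (Fin d)))
    (hX : ∀ x ∈ X, ∀ y ∈ X, x ≠ y → dist x y ^ 2 ∈ K) :
    ∃ (L : IntermediateField ℚ ℝ) (φ : EuclideanSpace ℝ (Fin d) → EuclideanSpace ℝ (Fin X.card)),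
      FiniteDimensional ℚ L ∧ K ≤ L ∧
      (∀ x ∈ X, ∀ y ∈ X, dist (φ x) (φ y) = dist x y) ∧
      (∀ x ∈ X, ∀ i : Fin X.card, φ x i ∈ L) := by
  rcases X.eq_empty_or_nonempty with rfl | ⟨x₀, hx₀⟩
  · exact ⟨K, 0, inferInstance, le_rfl, by simp, by simp⟩
  set u : Fin X.card → EuclideanSpace ℝ (Fin d) := fun i => (X.equivFin.symm i : _) - x₀
  have hu : ∀ x (hx : x ∈ X), u (X.equivFin ⟨x, hx⟩) = x - x₀ := by simp [u]
  obtain ⟨L, hL, hKL, hcoords⟩ := exists_finiteDimensional_inner_gramSchmidtNormed_mem K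
    (u := u) fun i j => inner_sub_sub_mem (S := X) hX (Subtype.prop _) (Subtype.prop _) hx₀
  refine ⟨L, fun x => innerCoords (gramSchmidtNormed ℝ u) (x - x₀), hL, hKL, ?_, ?_⟩
  · intro x hx y hy
    dsimp only
    rw [← dist_sub_right x y x₀, ← hu x hx, ← hu y hy]
    exact dist_innerCoords_gramSchmidtNormed
      (sub_mem (subset_span ⟨_, rfl⟩) (subset_span ⟨_, rfl⟩))
  · intro x hx k
    simp only [innerCoords, PiLp.toLp_apply, ← hu x hx]
    exact hcoords k _
end

section
/- Let X = {x_1,…,x_n} ⊆ ℝ^d have all pairwise squared distances in A_𝔭 (the localization of O_K at prime 𝔭), and let all coordinates x_{ij} lie in a finite extension L of K with P ⊆ O_L a prime above 𝔭. Set t = max(0, −min_{i,j} ord_P(2 x_{ij})). Then for any vectors a_1,…,a_n with all coordinates in (P B_P)^{t+1}, the perturbed set X' = {x_1 + a_1, …, x_n + a_n} satisfies ‖(x_i+a_i) − (x_j+a_j)‖² ≡ ‖x_i − x_j‖² (mod P B_P) for all i, j. -/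
/-!
Each coordinate contributes `((x + a) - (y + b))² - (x - y)² = (a - b) * ((2x - 2y) + (a - b))`.
The first factor lies in `P^(t+1)`, while the choice of `t` puts the second in `P^(-t)`, so the
product, and hence the sum over coordinates, lies in `P`: the ultrametric inequality does the rest.
-/

open IsDedekindDomain NumberField WithZero

section PerturbedSquares

variable {R Γ₀ : Type*} [CommRing R] [LinearOrderedCommGroupWithZero Γ₀] (v : Valuation R Γ₀)

lemma perturbed_sq_sub_sq (x y a b : R) :
    ((x + a) - (y + b)) ^ 2 - (x - y) ^ 2 = (a - b) * ((2 * x - 2 * y) + (a - b)) := by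
  ring

variable {γ δ : Γ₀}

lemma Valuation.perturbed_sq_sub_sq_lt_one (hδγ : δ ≤ γ) (hlt : δ * γ < 1) {x y a b : R}
    (hx : v (2 * x) ≤ γ) (hy : v (2 * y) ≤ γ) (ha : v a ≤ δ) (hb : v b ≤ δ) :
    v (((x + a) - (y + b)) ^ 2 - (x - y) ^ 2) < 1 := by
  have hab : v (a - b) ≤ δ := (v.map_sub a b).trans (max_le ha hb)
  have hcofactor : v ((2 * x - 2 * y) + (a - b)) ≤ γ :=
    (v.map_add _ _).trans (max_le ((v.map_sub _ _).trans (max_le hx hy)) (hab.trans hδγ))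
  rw [perturbed_sq_sub_sq, v.map_mul]
  exact (mul_le_mul' hab hcofactor).trans_lt hlt

lemma Valuation.sum_perturbed_sq_sub_sum_sq_lt_one (hδγ : δ ≤ γ) (hlt : δ * γ < 1)
    {ι : Type*} [Fintype ι] {x y a b : ι → R}
    (hx : ∀ k, v (2 * x k) ≤ γ) (hy : ∀ k, v (2 * y k) ≤ γ)
    (ha : ∀ k, v (a k) ≤ δ) (hb : ∀ k, v (b k) ≤ δ) :
    v ((∑ k, ((x k + a k) - (y k + b k)) ^ 2) - ∑ k, (x k - y k) ^ 2) < 1 := by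
  rw [← Finset.sum_sub_distrib]
  exact v.map_sum_lt one_ne_zero fun k _ ↦
    v.perturbed_sq_sub_sq_lt_one hδγ hlt (hx k) (hy k) (ha k) (hb k)

end PerturbedSquares

theorem perturbation_preserves_mod_distances_general
    (L : Type*) [Field L] [NumberField L]
    (P : HeightOneSpectrum (𝓞 L))
    (n d : ℕ) (x : Fin n → Fin d → L)
    (t : ℕ)
    (ht : ∀ (i : Fin n) (k : Fin d),
      P.valuation L (2 * x i k) ≤
        ((Multiplicative.ofAdd (t : ℤ) : Multiplicative ℤ) : WithZero (Multiplicative ℤ)))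
    (a : Fin n → Fin d → L)
    (ha : ∀ (i : Fin n) (k : Fin d),
      P.valuation L (a i k) ≤
        ((Multiplicative.ofAdd (-(t + 1 : ℤ)) : Multiplicative ℤ) : WithZero (Multiplicative ℤ))) :
    ∀ i j : Fin n,
      P.valuation L ((∑ k : Fin d, ((x i k + a i k) - (x j k + a j k)) ^ 2) -
        ∑ k : Fin d, (x i k - x j k) ^ 2) < 1 := by
  have hδγ : exp (-(t + 1 : ℤ)) ≤ exp (t : ℤ) := exp_le_exp.2 (by omega)
  have hlt : exp (-(t + 1 : ℤ)) * exp (t : ℤ) < 1 := by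
    rw [← exp_add, ← exp_zero, exp_lt_exp]
    omega
  intro i j
  exact (P.valuation L).sum_perturbed_sq_sub_sum_sq_lt_one hδγ hlt (ht i) (ht j) (ha i) (ha j)

theorem perturbation_preserves_mod_distances
    (K L : Type*) [Field K] [NumberField K] [Field L] [NumberField L] [Algebra K L]
    (𝔭 : HeightOneSpectrum (𝓞 K)) (P : HeightOneSpectrum (𝓞 L))
    (hlie : 𝔭.asIdeal = P.asIdeal.comap (algebraMap (𝓞 K) (𝓞 L)))
    (n d : ℕ) (x : Fin n → Fin d → L)
    (hdist : ∀ i j : Fin n, ∃ c : K,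
      algebraMap K L c = ∑ k : Fin d, (x i k - x j k) ^ 2 ∧ 𝔭.valuation K c ≤ 1)
    (t : ℕ)
    (ht : ∀ (i : Fin n) (k : Fin d),
      P.valuation L (2 * x i k) ≤
        ((Multiplicative.ofAdd (t : ℤ) : Multiplicative ℤ) : WithZero (Multiplicative ℤ)))
    (a : Fin n → Fin d → L)
    (ha : ∀ (i : Fin n) (k : Fin d),
      P.valuation L (a i k) ≤
        ((Multiplicative.ofAdd (-(t + 1 : ℤ)) : Multiplicative ℤ) : WithZero (Multiplicative ℤ))) :
    ∀ i j : Fin n,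
      P.valuation L ((∑ k : Fin d, ((x i k + a i k) - (x j k + a j k)) ^ 2) -
        ∑ k : Fin d, (x i k - x j k) ^ 2) < 1 :=
  perturbation_preserves_mod_distances_general L P n d x t ht a ha
end

section
/- Let d ≥ 2, 2 ≤ k ≤ d, and β = (k + √(k(d+1)(d+2−k)))/(k(d+1−k)) (or with minus sign), with K = ℚ(β) ≠ ℚ. Then t = −1/β = k/(d+2) ± √(k(d+1)(d+2−k))/(d+2) is an algebraic integer if and only if k = (d+2)/2 and d ≡ 0 (mod 4). -/
/-!
With `N = k(d+1)(d+2-k)`, the number `t = (k + √N)/(d+2)` is a root of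
`X² - (2k/(d+2)) X + (k² - N)/(d+2)²`, and `t` is irrational because `N` is not a square.
Hence this is the minimal polynomial of `t` over `ℚ`, and since `ℤ` is integrally closed,
`t` is integral iff both coefficients are integers. As `0 < 2k < 2(d+2)`, the trace `2k/(d+2)`
is an integer only when `2k = d+2`, and then the norm `(k² - N)/(d+2)²` equals `-d/4`.
-/

open Polynomial

theorem isIntegral_int_iff_of_sq_sub_mul_add_eq_zero {L : Type*} [Field L] [CharZero L] {x : L}
    (hx : x ∉ Set.range ((↑) : ℚ → L)) {b c : ℚ} (h : x ^ 2 - b * x + c = 0) :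
    IsIntegral ℤ x ↔ b.den = 1 ∧ c.den = 1 := by
  set p : ℚ[X] := X ^ 2 - C b * X + C c
  have hp_monic : p.Monic := by unfold p; monicity!
  have hp_deg : p.natDegree = 2 := by unfold p; compute_degree!
  have hp_root : aeval x p = 0 := by simpa [p] using h
  constructor
  · intro hint
    have hint_ℚ : IsIntegral ℚ x := hint.tower_top
    have hdvd : minpoly ℚ x ∣ p := minpoly.dvd ℚ x hp_root
    have hdeg_le : (minpoly ℚ x).natDegree ≤ 2 :=
      hp_deg ▸ natDegree_le_of_dvd hdvd hp_monic.ne_zero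
    have hdeg_ne_one : (minpoly ℚ x).natDegree ≠ 1 := fun h1 ↦
      hx (by simpa using minpoly.natDegree_eq_one_iff.mp h1)
    have hmin : p = minpoly ℚ x :=
      eq_of_monic_of_dvd_of_natDegree_le (minpoly.monic hint_ℚ) hp_monic hdvd
        (by have := minpoly.natDegree_pos hint_ℚ; omega)
    rw [minpoly.isIntegrallyClosed_eq_field_fractions' ℚ hint] at hmin
    have hb : -b = (minpoly ℤ x).coeff 1 := by
      simpa [p, coeff_X_pow] using congrArg (coeff · 1) hmin
    have hc : c = (minpoly ℤ x).coeff 0 := by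
      simpa [p, coeff_X_pow] using congrArg (coeff · 0) hmin
    exact ⟨by rw [← Rat.neg_den, hb, Rat.den_intCast], by rw [hc, Rat.den_intCast]⟩
  · rintro ⟨hb, hc⟩
    rw [← (Rat.den_eq_one_iff b).mp hb, ← (Rat.den_eq_one_iff c).mp hc] at h
    refine ⟨X ^ 2 - C b.num * X + C c.num, by monicity!, ?_⟩
    rw [← aeval_def]
    simpa using h

theorem irrational_of_sq_eq_natCast {s : ℝ} {n : ℕ} (hn : ¬ ∃ m : ℕ, m ^ 2 = n)
    (hs : s ^ 2 = n) : Irrational s := by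
  refine irrational_nrt_of_notint_nrt 2 n (mod_cast hs) ?_ two_pos
  rintro ⟨y, rfl⟩
  refine hn ⟨y.natAbs, ?_⟩
  rw [← Int.natAbs_pow, ← Int.natAbs_natCast n]
  exact congrArg Int.natAbs (mod_cast hs)

theorem Rat.den_natCast_div_eq_one_iff_of_lt_two_mul {a b : ℕ} (ha : 0 < a) (hab : a < 2 * b) :
    ((a : ℚ) / b).den = 1 ↔ a = b := by
  rw [Rat.den_div_natCast_eq_one_iff _ _ (by omega)]
  exact ⟨fun h ↦ Nat.eq_of_dvd_of_lt_two_mul ha.ne' h hab, fun h ↦ h ▸ dvd_rfl⟩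

theorem sq_sub_div_sq_eq_neg_div_four {d k : ℕ} (h : 2 * k = d + 2) :
    ((k : ℚ) ^ 2 - (k * (d + 1) * (d + 2 - k) : ℕ)) / ((d : ℚ) + 2) ^ 2
      = ((-d : ℤ) : ℚ) / ((4 : ℤ) : ℚ) := by
  have hk : (k : ℚ) ≠ 0 := by norm_cast; omega
  have hd : (d : ℚ) + 2 = 2 * k := by exact_mod_cast h.symm
  rw [show d + 2 - k = k by omega, hd]
  push_cast
  field_simp
  ring

theorem lrs_integral_iff (d k : ℕ) (hk2 : 2 ≤ k) (hkd : k ≤ d)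
    (hns : ¬ ∃ m : ℕ, m ^ 2 = k * (d + 1) * (d + 2 - k))
    (s : ℝ) (hs : s ^ 2 = (k * (d + 1) * (d + 2 - k) : ℕ)) :
    IsIntegral ℤ (((k : ℝ) + s) / ((d : ℝ) + 2)) ↔ (2 * k = d + 2 ∧ d % 4 = 0) := by
  set t := ((k : ℝ) + s) / ((d : ℝ) + 2)
  have ht_irr : Irrational t := by
    simpa using ((irrational_of_sq_eq_natCast hns hs).natCast_add k).div_natCast
      (m := d + 2) (by omega)
  have ht_quad : t ^ 2 - (((2 * k : ℕ) / (d + 2 : ℕ) : ℚ) : ℝ) * t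
      + ((((k : ℚ) ^ 2 - (k * (d + 1) * (d + 2 - k) : ℕ)) / ((d : ℚ) + 2) ^ 2 : ℚ) : ℝ)
      = 0 := by
    simp only [t, Rat.cast_div, Rat.cast_sub, Rat.cast_pow, Rat.cast_natCast, Rat.cast_add,
      Rat.cast_ofNat, ← hs]
    field_simp
    push_cast
    ring
  rw [isIntegral_int_iff_of_sq_sub_mul_add_eq_zero ht_irr ht_quad,
    Rat.den_natCast_div_eq_one_iff_of_lt_two_mul (by omega) (by omega)]
  refine and_congr_right fun h ↦ ?_
  rw [sq_sub_div_sq_eq_neg_div_four h, Rat.den_div_intCast_eq_one_iff _ _ (by norm_num)]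
  omega
end

section
/- Let R = {e_1,…,e_{d+1}} be the standard regular simplex in the hyperplane H_d = {x ∈ ℝ^{d+1} : Σ x_i = 1}, and let x ∈ H_d. Then R ∪ {x} is a 2-distance set (has exactly two distinct squared distances, one of them the simplex edge length 2) only if x has coordinates taking at most two values c and c + β with c = 1/(d+1) − ((d+1−k)/(d+1))β where k is the number of coordinates equal to c. -/
theorem simplex_plus_point_two_distance (d : ℕ) (hd : 1 ≤ d)
    (x : EuclideanSpace ℝ (Fin (d + 1)))
    (hx : ∑ i, x i = 1)
    (hxR : ∀ i : Fin (d + 1), x ≠ EuclideanSpace.single i (1 : ℝ))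
    (h2 : Set.ncard {t : ℝ | ∃ u ∈ insert x {y | ∃ i : Fin (d + 1), y = EuclideanSpace.single i (1 : ℝ)},
        ∃ v ∈ insert x {y | ∃ i : Fin (d + 1), y = EuclideanSpace.single i (1 : ℝ)},
        u ≠ v ∧ dist u v ^ 2 = t} = 2) :
    ∃ c β : ℝ, (∀ i : Fin (d + 1), x i = c ∨ x i = c + β) ∧
      c = 1 / ((d : ℝ) + 1) -
        (((d : ℝ) + 1 - (Finset.univ.filter (fun i : Fin (d + 1) => x i = c)).card) /
          ((d : ℝ) + 1)) * β := by
  obtain ⟨a, b, hab, hD⟩ := Set.ncard_eq_two.mp h2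
  set S : ℝ := ∑ j, x j ^ 2 with hS
  -- distance formula
  have hdist : ∀ i : Fin (d + 1),
      dist x (EuclideanSpace.single i (1 : ℝ)) ^ 2 = S - 2 * x i + 1 := by
    intro i
    rw [EuclideanSpace.dist_eq, Real.sq_sqrt (Finset.sum_nonneg fun j _ => by positivity)]
    have h1 : ∀ j : Fin (d + 1),
        dist (x j) (EuclideanSpace.single i (1 : ℝ) j) ^ 2
          = x j ^ 2 + (if j = i then -2 * x j + 1 else 0) := by
      intro j
      rw [EuclideanSpace.single_apply, Real.dist_eq, sq_abs]
      split <;> ring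
    rw [Finset.sum_congr rfl fun j _ => h1 j, Finset.sum_add_distrib,
      Finset.sum_ite_eq' Finset.univ i (fun j => -2 * x j + 1)]
    simp [hS]
    ring
  -- each such distance is in the set
  have hmem : ∀ i : Fin (d + 1), S - 2 * x i + 1 = a ∨ S - 2 * x i + 1 = b := by
    intro i
    have : (S - 2 * x i + 1) ∈ ({a, b} : Set ℝ) := by
      rw [← hD]
      exact ⟨x, Set.mem_insert _ _,
        EuclideanSpace.single i (1 : ℝ), Set.mem_insert_of_mem _ ⟨i, rfl⟩,
        hxR i, hdist i⟩
    simpa using this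
  refine ⟨(S + 1 - a) / 2, (a - b) / 2, ?_, ?_⟩
  · intro i
    rcases hmem i with h | h
    · left; linarith
    · right; linarith
  · set c : ℝ := (S + 1 - a) / 2
    set β : ℝ := (a - b) / 2
    set k : ℕ := (Finset.univ.filter (fun i : Fin (d + 1) => x i = c)).card with hk
    have hxi : ∀ i : Fin (d + 1), x i = c ∨ x i = c + β := by
      intro i
      rcases hmem i with h | h
      · left; simp only [c]; linarith
      · right; simp only [c, β]; linarith
    have hsplit := Finset.sum_filter_add_sum_filter_not Finset.univ
      (fun i : Fin (d + 1) => x i = c) x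
    have h1 : ∑ i ∈ Finset.univ.filter (fun i : Fin (d + 1) => x i = c), x i
        = (k : ℝ) * c := by
      rw [Finset.sum_congr rfl fun i hi => (Finset.mem_filter.mp hi).2]
      simp [hk, mul_comm]
    have h2' : ∑ i ∈ Finset.univ.filter (fun i : Fin (d + 1) => ¬ x i = c), x i
        = ((d + 1 - k : ℕ) : ℝ) * (c + β) := by
      have : ∀ i ∈ Finset.univ.filter (fun i : Fin (d + 1) => ¬ x i = c),
          x i = c + β := by
        intro i hi
        rcases hxi i with h | h
        · exact absurd h (Finset.mem_filter.mp hi).2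
        · exact h
      rw [Finset.sum_congr rfl this, Finset.sum_const, nsmul_eq_mul]
      congr 2
      have := Finset.card_filter_add_card_filter_not
        (s := Finset.univ) (p := fun i : Fin (d + 1) => x i = c)
      simp only [Finset.card_univ, Fintype.card_fin] at this
      omega
    have hkle : k ≤ d + 1 := by
      have := Finset.card_filter_le Finset.univ (fun i : Fin (d + 1) => x i = c)
      simpa using this
    have hcast : ((d + 1 - k : ℕ) : ℝ) = (d : ℝ) + 1 - (k : ℝ) := by
      push_cast [Nat.cast_sub hkle]
      ring
    have hsum : (k : ℝ) * c + ((d : ℝ) + 1 - (k : ℝ)) * (c + β) = 1 := by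
      rw [← hcast, ← h1, ← h2', hsplit]
      exact hx
    have hdpos : (d : ℝ) + 1 ≠ 0 := by positivity
    field_simp
    ring_nf
    ring_nf at hsum
    linarith
end
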